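/- arXiv:math/0105057 — 2 statements merged into one kernel-verified Lean document; each statement's English description precedes it below -/
import Mathlib

section
/- Let u be harmonic on an open set U ⊆ ℝ², let v(x,y) = a·(x,y) + ε be an affine function with a ∈ ℝ², ε > 0, positive on U. For each fixed (x,y) the map s ↦ u(x,y) + s·v(x,y) is invertible in s, with inverse t(x,y;z) = (z - u(x,y))/v(x,y). Then the vector field φ(x,y,z) = (2∇u + 2((z-u)/v)·a, |∇u + ((z-u)/v)·a|²) is divergence free on U × ℝ. -/
/-! With `w = (z - u)/v` and `S = ∇u + w a`, one has `∇w = -S/v` and `∂_z w = 1/v`. Hence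
`div φ = 2Δu - 2 a·S/v + ∂_z |S|² = 2Δu - 2 a·S/v + 2 S·a/v = 2Δu = 0`. -/

/-- The slope field `∇u + ((z-u)/v)·a` where `v(x,y) = a·(x,y) + ε`. -/
noncomputable def slopeField (u : ℝ × ℝ → ℝ) (a : ℝ × ℝ) (ε : ℝ)
    (p : ℝ × ℝ) (z : ℝ) : ℝ × ℝ :=
  (deriv (fun x => u (x, p.2)) p.1 + (z - u p) / (a.1 * p.1 + a.2 * p.2 + ε) * a.1,
   deriv (fun y => u (p.1, y)) p.2 + (z - u p) / (a.1 * p.1 + a.2 * p.2 + ε) * a.2)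

theorem hasDerivAt_deriv_add_div_mul {g ℓ : ℝ → ℝ} {x c : ℝ} (z : ℝ)
    (hg : ContDiffAt ℝ 2 g x) (hℓ : HasDerivAt ℓ c x) (hℓx : ℓ x ≠ 0) :
    HasDerivAt (fun t => deriv g t + (z - g t) / ℓ t * c)
      (deriv (deriv g) x - c * (deriv g x + (z - g x) / ℓ x * c) / ℓ x) x := by
  have hg' : DifferentiableAt ℝ (deriv g) x :=
    (hg.derivWithin (m := 1) (by norm_num)).differentiableAt one_ne_zero
  have hw : HasDerivAt (fun t => (z - g t) / ℓ t)
      (((0 - deriv g x) * ℓ x - (z - g x) * c) / ℓ x ^ 2) x :=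
    ((hasDerivAt_const x z).sub (hg.differentiableAt two_ne_zero).hasDerivAt).div hℓ hℓx
  refine (hg'.hasDerivAt.add (hw.mul_const c)).congr_deriv ?_
  field_simp
  ring

section SlopeField

variable {u : ℝ × ℝ → ℝ} {p : ℝ × ℝ} (a : ℝ × ℝ) (ε z : ℝ)

theorem hasDerivAt_slopeField_fst (hu : ContDiffAt ℝ 2 u p)
    (hv : a.1 * p.1 + a.2 * p.2 + ε ≠ 0) :
    HasDerivAt (fun x => (slopeField u a ε (x, p.2) z).1)
      (deriv (fun x => deriv (fun x' => u (x', p.2)) x) p.1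
        - a.1 * (slopeField u a ε p z).1 / (a.1 * p.1 + a.2 * p.2 + ε)) p.1 := by
  have hslice : ContDiffAt ℝ 2 (fun x => u (x, p.2)) p.1 :=
    hu.comp p.1 (contDiffAt_id.prodMk contDiffAt_const)
  have hv' : HasDerivAt (fun x => a.1 * x + a.2 * p.2 + ε) a.1 p.1 := by
    simpa using (((hasDerivAt_id p.1).const_mul a.1).add_const (a.2 * p.2)).add_const ε
  exact hasDerivAt_deriv_add_div_mul z hslice hv' hv

theorem hasDerivAt_slopeField_snd (hu : ContDiffAt ℝ 2 u p)
    (hv : a.1 * p.1 + a.2 * p.2 + ε ≠ 0) :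
    HasDerivAt (fun y => (slopeField u a ε (p.1, y) z).2)
      (deriv (fun y => deriv (fun y' => u (p.1, y')) y) p.2
        - a.2 * (slopeField u a ε p z).2 / (a.1 * p.1 + a.2 * p.2 + ε)) p.2 := by
  have hslice : ContDiffAt ℝ 2 (fun y => u (p.1, y)) p.2 :=
    hu.comp p.2 (contDiffAt_const.prodMk contDiffAt_id)
  have hv' : HasDerivAt (fun y => a.1 * p.1 + a.2 * y + ε) a.2 p.2 := by
    simpa using (((hasDerivAt_id p.2).const_mul a.2).const_add (a.1 * p.1)).add_const ε
  exact hasDerivAt_deriv_add_div_mul z hslice hv' hv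

theorem hasDerivAt_slopeField_normSq :
    HasDerivAt (fun z' => (slopeField u a ε p z').1 ^ 2 + (slopeField u a ε p z').2 ^ 2)
      (2 * (a.1 * (slopeField u a ε p z).1 + a.2 * (slopeField u a ε p z).2)
        / (a.1 * p.1 + a.2 * p.2 + ε)) z := by
  have hw : HasDerivAt (fun z' => (z' - u p) / (a.1 * p.1 + a.2 * p.2 + ε))
      (1 / (a.1 * p.1 + a.2 * p.2 + ε)) z := by
    simpa using ((hasDerivAt_id z).sub_const (u p)).div_const (a.1 * p.1 + a.2 * p.2 + ε)
  have hfst := (hw.mul_const a.1).const_add (deriv (fun x => u (x, p.2)) p.1)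
  have hsnd := (hw.mul_const a.2).const_add (deriv (fun y => u (p.1, y)) p.2)
  refine ((hfst.pow 2).add (hsnd.pow 2)).congr_deriv ?_
  simp only [slopeField]
  ring

end SlopeField

theorem stmt_1_general (U : Set (ℝ × ℝ)) (hU : IsOpen U) (u : ℝ × ℝ → ℝ) (a : ℝ × ℝ)
    (ε : ℝ)
    (hu : ContDiffOn ℝ 2 u U)
    (hharm : ∀ p ∈ U,
      deriv (fun x => deriv (fun x' => u (x', p.2)) x) p.1
        + deriv (fun y => deriv (fun y' => u (p.1, y')) y) p.2 = 0)
    (hv : ∀ p ∈ U, 0 < a.1 * p.1 + a.2 * p.2 + ε) :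
    ∀ p ∈ U, ∀ z : ℝ,
      deriv (fun x => 2 * (slopeField u a ε (x, p.2) z).1) p.1
        + deriv (fun y => 2 * (slopeField u a ε (p.1, y) z).2) p.2
        + deriv (fun z' => (slopeField u a ε p z').1 ^ 2
            + (slopeField u a ε p z').2 ^ 2) z = 0 := by
  intro p hp z
  have hup : ContDiffAt ℝ 2 u p := hu.contDiffAt (hU.mem_nhds hp)
  have hvp : a.1 * p.1 + a.2 * p.2 + ε ≠ 0 := (hv p hp).ne'
  rw [((hasDerivAt_slopeField_fst a ε z hup hvp).const_mul 2).deriv,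
    ((hasDerivAt_slopeField_snd a ε z hup hvp).const_mul 2).deriv,
    (hasDerivAt_slopeField_normSq a ε z).deriv]
  linear_combination 2 * hharm p hp

/-- For `u` harmonic on `U` and `v(x,y) = a·(x,y) + ε > 0` on `U`, the field
`φ(x,y,z) = (2∇u + 2((z-u)/v)a, |∇u + ((z-u)/v)a|²)` is divergence free on `U × ℝ`. -/
theorem stmt_1 (U : Set (ℝ × ℝ)) (hU : IsOpen U) (u : ℝ × ℝ → ℝ) (a : ℝ × ℝ)
    (ε : ℝ) (hε : 0 < ε)
    (hu : ContDiffOn ℝ 2 u U)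
    (hharm : ∀ p ∈ U,
      deriv (fun x => deriv (fun x' => u (x', p.2)) x) p.1
        + deriv (fun y => deriv (fun y' => u (p.1, y')) y) p.2 = 0)
    (hv : ∀ p ∈ U, 0 < a.1 * p.1 + a.2 * p.2 + ε) :
    ∀ p ∈ U, ∀ z : ℝ,
      deriv (fun x => 2 * (slopeField u a ε (x, p.2) z).1) p.1
        + deriv (fun y => 2 * (slopeField u a ε (p.1, y) z).2) p.2
        + deriv (fun z' => (slopeField u a ε p z').1 ^ 2
            + (slopeField u a ε p z').2 ^ 2) z = 0 :=
  stmt_1_general U hU u a ε hu hharm hv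
end

section
/- Consider the 3×3 symmetric matrix M with M₁₁ = 3/4 - √3/(2ε), M₁₂ = -2a, M₁₃ = 2b, M₂₂ = M₃₃ = -√3/ε, M₂₃ = 0, with a, b ∈ ℝ fixed. Then det M = -(3√3/(2ε³))(1 - (√3/2)ε) + (4√3/ε)(a² + b²), and for ε sufficiently small (depending on a, b), M is negative definite. -/
/-!
With `d = √3/ε` the matrix is the arrowhead matrix `[[c, p, q], [p, -d, 0], [q, 0, -d]]` with
`c = 3/4 - d/2`. Its determinant is `d (c d + p² + q²)`, and completing the squares in `v₁, v₂`
gives `d · vᵀ M v = (c d + p² + q²) v₀² - (d v₁ - p v₀)² - (d v₂ - q v₀)²`, so for `d > 0` the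
matrix is negative definite exactly when `c d + p² + q² < 0`. Here
`c d + p² + q² = -d²/2 + 3d/4 + 4(a² + b²)`, which is negative once `d` is large, i.e. `ε` small.
-/

open Matrix

namespace Arrowhead

variable (c p q d : ℝ)

theorem det_eq : (!![c, p, q; p, -d, 0; q, 0, -d] : Matrix (Fin 3) (Fin 3) ℝ).det
    = d * (c * d + p ^ 2 + q ^ 2) := by
  simp only [det_fin_three, of_apply, cons_val', cons_val_zero, cons_val_one, cons_val,
    cons_val_fin_one]
  ring

theorem mul_dotProduct_mulVec_eq (v : Fin 3 → ℝ) :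
    d * (v ⬝ᵥ (!![c, p, q; p, -d, 0; q, 0, -d] *ᵥ v))
      = (c * d + p ^ 2 + q ^ 2) * v 0 ^ 2 - (d * v 1 - p * v 0) ^ 2
        - (d * v 2 - q * v 0) ^ 2 := by
  simp only [mulVec, dotProduct, Fin.sum_univ_three, of_apply, cons_val', cons_val_zero,
    cons_val_one, cons_val, cons_val_fin_one]
  ring

variable {c p q d}

theorem dotProduct_mulVec_neg (hd : 0 < d) (h : c * d + p ^ 2 + q ^ 2 < 0)
    {v : Fin 3 → ℝ} (hv : v ≠ 0) :
    v ⬝ᵥ (!![c, p, q; p, -d, 0; q, 0, -d] *ᵥ v) < 0 := by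
  refine neg_of_mul_neg_right ?_ hd.le
  rw [mul_dotProduct_mulVec_eq]
  by_cases h0 : v 0 = 0
  · have h12 : v 1 ≠ 0 ∨ v 2 ≠ 0 := by
      by_contra! h12
      exact hv (funext fun i => by fin_cases i <;> simp [h0, h12.1, h12.2])
    rw [h0]
    rcases h12 with h1 | h2
    · nlinarith [sq_pos_of_ne_zero (mul_ne_zero hd.ne' h1), sq_nonneg (d * v 2)]
    · nlinarith [sq_pos_of_ne_zero (mul_ne_zero hd.ne' h2), sq_nonneg (d * v 1)]
  · nlinarith [mul_neg_of_neg_of_pos h (sq_pos_of_ne_zero h0),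
      sq_nonneg (d * v 1 - p * v 0), sq_nonneg (d * v 2 - q * v 0)]

end Arrowhead

/-- For fixed `a, b ∈ ℝ` and `ε > 0` small enough, the symmetric matrix
`M = [[3/4 - √3/(2ε), -2a, 2b], [-2a, -√3/ε, 0], [2b, 0, -√3/ε]]` satisfies
`det M = -(3√3/(2ε³))(1 - (√3/2)ε) + (4√3/ε)(a² + b²)` and is negative definite. -/
theorem stmt_16 (a b : ℝ) :
    ∃ ε₀ > (0 : ℝ), ∀ ε : ℝ, 0 < ε → ε < ε₀ →
      ((!![3 / 4 - Real.sqrt 3 / (2 * ε), -2 * a, 2 * b;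
           -2 * a, -Real.sqrt 3 / ε, 0;
           2 * b, 0, -Real.sqrt 3 / ε] : Matrix (Fin 3) (Fin 3) ℝ).det
          = -(3 * Real.sqrt 3 / (2 * ε ^ 3)) * (1 - Real.sqrt 3 / 2 * ε)
            + 4 * Real.sqrt 3 / ε * (a ^ 2 + b ^ 2))
      ∧ ∀ v : Fin 3 → ℝ, v ≠ 0 →
          v ⬝ᵥ ((!![3 / 4 - Real.sqrt 3 / (2 * ε), -2 * a, 2 * b;
           -2 * a, -Real.sqrt 3 / ε, 0;
           2 * b, 0, -Real.sqrt 3 / ε] : Matrix (Fin 3) (Fin 3) ℝ).mulVec v) < 0 := by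
  have hK : 0 ≤ a ^ 2 + b ^ 2 := by positivity
  refine ⟨Real.sqrt 3 / (2 + 4 * (a ^ 2 + b ^ 2)), by positivity, fun ε hε hεlt => ?_⟩
  set d := Real.sqrt 3 / ε with hd_def
  have hd : 2 + 4 * (a ^ 2 + b ^ 2) < d := by
    rwa [lt_div_iff₀ (by positivity), mul_comm, ← lt_div_iff₀ hε] at hεlt
  have hM : (!![3 / 4 - Real.sqrt 3 / (2 * ε), -2 * a, 2 * b; -2 * a, -Real.sqrt 3 / ε, 0;
      2 * b, 0, -Real.sqrt 3 / ε] : Matrix (Fin 3) (Fin 3) ℝ)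
      = !![3 / 4 - d / 2, -2 * a, 2 * b; -2 * a, -d, 0; 2 * b, 0, -d] := by
    rw [hd_def, neg_div, div_div, mul_comm ε 2]
  rw [hM]
  refine ⟨?_, fun v hv => Arrowhead.dotProduct_mulVec_neg (by linarith) ?_ hv⟩
  · have hs3 : Real.sqrt 3 ^ 2 = 3 := Real.sq_sqrt (by norm_num)
    rw [Arrowhead.det_eq, hd_def]
    field_simp
    linear_combination -8 * hs3
  · nlinarith
end
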